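/- For R, R_x ∈ SO(3) with Ψ(R,R_x) = (1/2)tr(I - R_xᵀR) < 1, the inner product (R_x e₃)ᵀ(R e₃) ≥ 1 - Ψ(R,R_x) > 0, where e₃ = (0,0,1). -/
import Mathlib


open Matrix

noncomputable def Psi (R Rx : Matrix (Fin 3) (Fin 3) ℝ) : ℝ :=
  (1 / 2) * Matrix.trace (1 - Rxᵀ * R)

theorem stmt4 (R Rx : Matrix (Fin 3) (Fin 3) ℝ)
    (hR : Rᵀ * R = 1) (hRdet : R.det = 1)
    (hRx : Rxᵀ * Rx = 1) (hRxdet : Rx.det = 1)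
    (hΨ : Psi R Rx < 1) :
    (Rx *ᵥ ![0, 0, 1]) ⬝ᵥ (R *ᵥ ![0, 0, 1]) ≥ 1 - Psi R Rx ∧ 1 - Psi R Rx > 0 := by
  set Q : Matrix (Fin 3) (Fin 3) ℝ := Rxᵀ * R with hQdef
  have hRx' : Rx * Rxᵀ = 1 := mul_eq_one_comm.mp hRx
  have hQorth : Qᵀ * Q = 1 := by
    have : Qᵀ * Q = Rᵀ * (Rx * Rxᵀ) * R := by
      simp [hQdef, Matrix.transpose_mul, Matrix.mul_assoc]
    rw [this, hRx', Matrix.mul_one, hR]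
  have hQdet : Q.det = 1 := by
    simp [hQdef, Matrix.det_mul, Matrix.det_transpose, hRdet, hRxdet]
  have hQorth' : Q * Qᵀ = 1 := mul_eq_one_comm.mp hQorth
  -- Qᵀ = adjugate Q
  have hadj : Qᵀ = Q.adjugate := by
    have h1 : Q * Q.adjugate = 1 := by rw [Matrix.mul_adjugate, hQdet, one_smul]
    have h2 : Q⁻¹ = Q.adjugate := Matrix.inv_eq_right_inv h1
    have h3 : Q⁻¹ = Qᵀ := Matrix.inv_eq_right_inv hQorth'
    rw [← h2, h3]
  rw [Matrix.adjugate_fin_three] at hadj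
  have C1 : Q 0 0 = Q 1 1 * Q 2 2 - Q 1 2 * Q 2 1 := by
    have := congrFun (congrFun hadj 0) 0; simpa using this
  have C2 : Q 1 1 = Q 0 0 * Q 2 2 - Q 0 2 * Q 2 0 := by
    have := congrFun (congrFun hadj 1) 1; simpa using this
  have C3 : Q 2 2 = Q 0 0 * Q 1 1 - Q 0 1 * Q 1 0 := by
    have := congrFun (congrFun hadj 2) 2; simpa using this
  have r1 : Q 0 0 ^ 2 + Q 0 1 ^ 2 + Q 0 2 ^ 2 = 1 := by
    have := congrFun (congrFun hQorth' 0) 0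
    simp [Matrix.mul_apply, Fin.sum_univ_three, Matrix.one_apply] at this
    linear_combination this
  have r2 : Q 1 0 ^ 2 + Q 1 1 ^ 2 + Q 1 2 ^ 2 = 1 := by
    have := congrFun (congrFun hQorth' 1) 1
    simp [Matrix.mul_apply, Fin.sum_univ_three, Matrix.one_apply] at this
    linear_combination this
  have r3 : Q 2 0 ^ 2 + Q 2 1 ^ 2 + Q 2 2 ^ 2 = 1 := by
    have := congrFun (congrFun hQorth' 2) 2
    simp [Matrix.mul_apply, Fin.sum_univ_three, Matrix.one_apply] at this
    linear_combination this
  -- key inequality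
  have key : 1 + Q 2 2 - Q 0 0 - Q 1 1 ≥ 0 := by
    have hid : 4*(1 + Q 2 2 - Q 0 0 - Q 1 1) =
        (Q 1 0 - Q 0 1)^2 + (Q 0 2 + Q 2 0)^2 + (Q 1 2 + Q 2 1)^2 +
        (1 + Q 2 2 - Q 0 0 - Q 1 1)^2 := by
      linear_combination (-1)*r1 + (-1)*r2 + (-1)*r3 + 2*C3 - 2*C1 - 2*C2
    nlinarith [sq_nonneg (Q 1 0 - Q 0 1), sq_nonneg (Q 0 2 + Q 2 0),
      sq_nonneg (Q 1 2 + Q 2 1), sq_nonneg (1 + Q 2 2 - Q 0 0 - Q 1 1)]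
  have hdot : (Rx *ᵥ ![0, 0, 1]) ⬝ᵥ (R *ᵥ ![0, 0, 1]) = Q 2 2 := by
    simp [hQdef, Matrix.mulVec, dotProduct, Matrix.mul_apply,
      Fin.sum_univ_three, Matrix.transpose_apply]
  have hPsi : Psi R Rx = (1/2) * (3 - (Q 0 0 + Q 1 1 + Q 2 2)) := by
    rw [Psi, ← hQdef]
    rw [Matrix.trace_sub, Matrix.trace_one]
    simp [Matrix.trace, Matrix.diag, Fin.sum_univ_three]
  constructor
  · rw [hdot, hPsi]; linarith
  · linarith
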